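/- Let Q be a locally finite quiver (each vertex has finitely many arrows attached) that is interval-finite (for any two vertices x, y, the set Q(x,y) of paths from x to y is finite). If a full subquiver Σ of Q is both top-finite (finitely many sources, and every vertex of Σ is a successor of one of them) and socle-finite (finitely many sinks, and every vertex of Σ is a predecessor of one of them), then Σ has only finitely many vertices. -/
import Mathlib


open Quiver

universe u v

/-- The quiver is locally finite: each vertex meets only finitely many arrows. -/
def QuiverLocallyFinite (V : Type u) [Quiver.{v} V] : Prop :=
  (∀ x y : V, Finite (x ⟶ y)) ∧
    (∀ x : V, {y : V | Nonempty (x ⟶ y)}.Finite) ∧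
    (∀ x : V, {y : V | Nonempty (y ⟶ x)}.Finite)

/-- The quiver is interval-finite: finitely many paths between any two vertices. -/
def IntervalFinite (V : Type u) [Quiver.{v} V] : Prop :=
  ∀ x y : V, Finite (Quiver.Path x y)

/-- `y` is reachable from `x` by a path all of whose vertices lie in `S`. -/
def ReachIn {V : Type u} [Quiver.{v} V] (S : Set V) (x y : V) : Prop :=
  Relation.ReflTransGen (fun a b => a ∈ S ∧ b ∈ S ∧ Nonempty (a ⟶ b)) x y

/-- `x` is a source vertex of the full subquiver on `S`. -/
def IsSourceIn {V : Type u} [Quiver.{v} V] (S : Set V) (x : V) : Prop :=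
  x ∈ S ∧ ∀ y ∈ S, IsEmpty (y ⟶ x)

/-- `x` is a sink vertex of the full subquiver on `S`. -/
def IsSinkIn {V : Type u} [Quiver.{v} V] (S : Set V) (x : V) : Prop :=
  x ∈ S ∧ ∀ y ∈ S, IsEmpty (x ⟶ y)

/-- The full subquiver on `S` is top-finite: it has finitely many sources and every
vertex of `S` is a successor (within `S`) of one of them. -/
def TopFinite {V : Type u} [Quiver.{v} V] (S : Set V) : Prop :=
  {x | IsSourceIn S x}.Finite ∧ ∀ x ∈ S, ∃ s, IsSourceIn S s ∧ ReachIn S s x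

/-- The full subquiver on `S` is socle-finite: it has finitely many sinks and every
vertex of `S` is a predecessor (within `S`) of one of them. -/
def SocleFinite {V : Type u} [Quiver.{v} V] (S : Set V) : Prop :=
  {x | IsSinkIn S x}.Finite ∧ ∀ x ∈ S, ∃ s, IsSinkIn S s ∧ ReachIn S x s


def pverts {V : Type u} [Quiver.{v} V] : ∀ {a b : V}, Quiver.Path a b → Set V
  | a, _, .nil => {a}
  | _, b, .cons p _ => pverts p ∪ {b}

lemma pverts_finite {V : Type u} [Quiver.{v} V] {a b : V} (p : Quiver.Path a b) :
    (pverts p).Finite := by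
  induction p with
  | nil => simp only [pverts]; exact Set.finite_singleton a
  | cons p e ih => simp only [pverts]; exact ih.union (Set.finite_singleton _)

lemma self_mem_pverts {V : Type u} [Quiver.{v} V] {a b : V} (p : Quiver.Path a b) :
    b ∈ pverts p := by
  cases p with
  | nil => simp [pverts]
  | cons p e => simp [pverts]

lemma pverts_comp_left {V : Type u} [Quiver.{v} V] {a b c : V} (p : Quiver.Path a b)
    (q : Quiver.Path b c) : pverts p ⊆ pverts (p.comp q) := by
  induction q with
  | nil => exact subset_rfl
  | cons q e ih =>
      refine ih.trans ?_
      show pverts (p.comp q) ⊆ pverts ((p.comp q).cons e)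
      simp only [pverts]
      exact Set.subset_union_left

lemma reachIn_path {V : Type u} [Quiver.{v} V] {S : Set V} {x y : V}
    (h : ReachIn S x y) : Nonempty (Quiver.Path x y) := by
  induction h with
  | refl => exact ⟨Quiver.Path.nil⟩
  | tail _ hbc ih =>
      obtain ⟨p⟩ := ih
      obtain ⟨e⟩ := hbc.2.2
      exact ⟨p.cons e⟩

/-- A full subquiver of a strongly locally finite quiver which is both top-finite and
socle-finite has only finitely many vertices. -/
theorem topFinite_socleFinite_finite {V : Type u} [Quiver.{v} V]
    (hlf : QuiverLocallyFinite V) (hif : IntervalFinite V)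
    (S : Set V) (htop : TopFinite S) (hsoc : SocleFinite S) :
    S.Finite := by
  have hsub : S ⊆ ⋃ s ∈ {x | IsSourceIn S x}, ⋃ t ∈ {x | IsSinkIn S x},
      ⋃ r : Quiver.Path s t, pverts r := by
    intro x hx
    obtain ⟨s, hs, hr1⟩ := htop.2 x hx
    obtain ⟨t, ht, hr2⟩ := hsoc.2 x hx
    obtain ⟨p⟩ := reachIn_path hr1
    obtain ⟨q⟩ := reachIn_path hr2
    refine Set.mem_biUnion hs (Set.mem_biUnion ht ?_)
    exact Set.mem_iUnion.2 ⟨p.comp q, pverts_comp_left p q (self_mem_pverts p)⟩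
  refine Set.Finite.subset ?_ hsub
  refine htop.1.biUnion fun s _ => hsoc.1.biUnion fun t _ => ?_
  have := hif s t
  exact Set.finite_iUnion fun r => pverts_finite r
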